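/- Let (X, ω_X), (Y, ω_Y), (Z, ω_Z) be symplectic vector spaces, f a Lagrangian subspace of X × Y with the form ω_X ⊕ (−ω_Y), and g a Lagrangian subspace of Y × Z with the form ω_Y ⊕ (−ω_Z). Then the set-theoretic composition f ∘ g = {(x,z) : ∃ y ∈ Y, (x,y) ∈ f and (y,z) ∈ g} is a Lagrangian subspace of X × Z with the form ω_X ⊕ (−ω_Z). -/

import Mathlib

/-- The symplectic orthogonal `W^ω = {v : V | ∀ w ∈ W, ω v w = 0}` of a subspace `W`
with respect to a bilinear form `ω`. -/
def symplOrth {V : Type*} [AddCommGroup V] [Module ℝ V]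
    (ω : V →ₗ[ℝ] V →ₗ[ℝ] ℝ) (W : Submodule ℝ V) : Submodule ℝ V where
  carrier := {v | ∀ w ∈ W, ω v w = 0}
  zero_mem' := by intro w hw; simp
  add_mem' := by intro a b ha hb w hw; simp [ha w hw, hb w hw]
  smul_mem' := by intro c a ha w hw; simp [ha w hw]

/-- The form `ω_X ⊕ (−ω_Y)` on the product `X × Y`. -/
def prodFormNeg {X Y : Type*} [AddCommGroup X] [Module ℝ X] [AddCommGroup Y] [Module ℝ Y]
    (ωX : X →ₗ[ℝ] X →ₗ[ℝ] ℝ) (ωY : Y →ₗ[ℝ] Y →ₗ[ℝ] ℝ) :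
    (X × Y) →ₗ[ℝ] (X × Y) →ₗ[ℝ] ℝ :=
  LinearMap.mk₂ ℝ (fun p q => ωX p.1 q.1 - ωY p.2 q.2)
    (fun p p' q => by simp; ring)
    (fun c p q => by simp; ring)
    (fun p q q' => by simp; ring)
    (fun c p q => by simp; ring)

/-- Set-theoretic composition of linear relations:
`f ∘ g = {(x, z) : ∃ y, (x, y) ∈ f ∧ (y, z) ∈ g}`. -/
def relComp {X Y Z : Type*} [AddCommGroup X] [Module ℝ X] [AddCommGroup Y] [Module ℝ Y]
    [AddCommGroup Z] [Module ℝ Z]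
    (f : Submodule ℝ (X × Y)) (g : Submodule ℝ (Y × Z)) : Submodule ℝ (X × Z) where
  carrier := {p | ∃ y : Y, (p.1, y) ∈ f ∧ (y, p.2) ∈ g}
  zero_mem' := ⟨0, by exact f.zero_mem, by exact g.zero_mem⟩
  add_mem' := by
    rintro p q ⟨y, hy1, hy2⟩ ⟨y', hy'1, hy'2⟩
    exact ⟨y + y', by simpa [Prod.mk_add_mk] using f.add_mem hy1 hy'1,
      by simpa [Prod.mk_add_mk] using g.add_mem hy2 hy'2⟩
  smul_mem' := by
    rintro c p ⟨y, hy1, hy2⟩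
    exact ⟨c • y, by simpa [Prod.smul_mk] using f.smul_mem c hy1,
      by simpa [Prod.smul_mk] using g.smul_mem c hy2⟩

/-!
On `(X × Y) × (Y × Z)` the form `Ω = ω_X ⊕ (−ω_Y) ⊕ ω_Y ⊕ (−ω_Z)` is symplectic and `L = f × g`
is Lagrangian. For `K = {(0, y, y, 0)}` one has `K^Ω = {(x, y, y, z)}`, so `L ∩ K^Ω` consists of
the `(x, y, y, z)` with `(x, y) ∈ f` and `(y, z) ∈ g`, and
`Ω((x, 0, 0, z), (x', y, y, z')) = ω_X(x, x') − ω_Z(z, z')`. Hence if `(x, z) ∈ (f ∘ g)^ω`, then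
`(x, 0, 0, z)` lies in `(L ∩ K^Ω)^Ω = L^Ω + K^ΩΩ = L + K`, and writing it as
`(x, −y, −y, z) + (0, y, y, 0)` exhibits `(x, z) ∈ f ∘ g`. The reverse inclusion is the isotropy
of `f` and `g`.
-/

open LinearMap (BilinForm)

section SymplecticOrthogonal

variable {V : Type*} [AddCommGroup V] [Module ℝ V]

@[simp]
lemma mem_symplOrth {ω : BilinForm ℝ V} {W : Submodule ℝ V} {v : V} :
    v ∈ symplOrth ω W ↔ ∀ w ∈ W, ω v w = 0 :=
  Iff.rfl

lemma symplOrth_eq_orthogonal {ω : BilinForm ℝ V} (hω : ω.IsRefl) (W : Submodule ℝ V) :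
    symplOrth ω W = ω.orthogonal W :=
  Submodule.ext fun v => forall₂_congr fun w _ => ⟨hω v w, hω w v⟩

lemma symplOrth_symplOrth [FiniteDimensional ℝ V] {ω : BilinForm ℝ V} (hω : ω.IsRefl)
    (hnd : ω.Nondegenerate) (W : Submodule ℝ V) : symplOrth ω (symplOrth ω W) = W := by
  rw [symplOrth_eq_orthogonal hω, symplOrth_eq_orthogonal hω, ω.orthogonal_orthogonal hnd hω]

lemma symplOrth_sup (ω : BilinForm ℝ V) (A B : Submodule ℝ V) :
    symplOrth ω (A ⊔ B) = symplOrth ω A ⊓ symplOrth ω B := by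
  ext v
  simp only [Submodule.mem_inf, mem_symplOrth]
  constructor
  · exact fun h => ⟨fun a ha => h a (Submodule.mem_sup_left ha),
      fun b hb => h b (Submodule.mem_sup_right hb)⟩
  · rintro ⟨hA, hB⟩ _ hw
    obtain ⟨a, ha, b, hb, rfl⟩ := Submodule.mem_sup.mp hw
    rw [map_add, hA a ha, hB b hb, add_zero]

lemma symplOrth_inf [FiniteDimensional ℝ V] {ω : BilinForm ℝ V} (hω : ω.IsRefl)
    (hnd : ω.Nondegenerate) (A B : Submodule ℝ V) :
    symplOrth ω (A ⊓ B) = symplOrth ω A ⊔ symplOrth ω B := by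
  conv_lhs => rw [← symplOrth_symplOrth hω hnd A, ← symplOrth_symplOrth hω hnd B,
    ← symplOrth_sup, symplOrth_symplOrth hω hnd]

lemma symplOrth_neg (ω : BilinForm ℝ V) (W : Submodule ℝ V) :
    symplOrth (-ω) W = symplOrth ω W := by
  ext
  simp

lemma separatingLeft_neg {ω : BilinForm ℝ V} (hω : ω.SeparatingLeft) : (-ω).SeparatingLeft :=
  fun v h => hω v fun w => neg_eq_zero.mp (h w)

end SymplecticOrthogonal

section ProdFormNeg

variable {X Y : Type*} [AddCommGroup X] [Module ℝ X] [AddCommGroup Y] [Module ℝ Y]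

@[simp]
lemma prodFormNeg_apply (ωX : BilinForm ℝ X) (ωY : BilinForm ℝ Y) (p q : X × Y) :
    prodFormNeg ωX ωY p q = ωX p.1 q.1 - ωY p.2 q.2 :=
  rfl

lemma isAlt_prodFormNeg {ωX : BilinForm ℝ X} {ωY : BilinForm ℝ Y} (hX : ωX.IsAlt)
    (hY : ωY.IsAlt) : (prodFormNeg ωX ωY).IsAlt :=
  fun p => by simp [hX p.1, hY p.2]

lemma separatingLeft_prodFormNeg {ωX : BilinForm ℝ X} {ωY : BilinForm ℝ Y}
    (hX : ωX.SeparatingLeft) (hY : ωY.SeparatingLeft) : (prodFormNeg ωX ωY).SeparatingLeft := by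
  rintro ⟨x, y⟩ h
  have hx : x = 0 := hX x fun w => by simpa using h (w, 0)
  have hy : y = 0 := hY y fun w => by simpa using h (0, w)
  rw [hx, hy, Prod.mk_zero_zero]

lemma symplOrth_prod (ωX : BilinForm ℝ X) (ωY : BilinForm ℝ Y) (f : Submodule ℝ X)
    (g : Submodule ℝ Y) :
    symplOrth (prodFormNeg ωX ωY) (f.prod g) = (symplOrth ωX f).prod (symplOrth ωY g) := by
  ext ⟨x, y⟩
  simp only [Submodule.mem_prod, mem_symplOrth, prodFormNeg_apply, Prod.forall]
  constructor
  · intro h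
    exact ⟨fun a ha => by simpa using h a 0 ⟨ha, g.zero_mem⟩,
      fun b hb => by simpa using h 0 b ⟨f.zero_mem, hb⟩⟩
  · rintro ⟨hf, hg⟩ a b ⟨ha, hb⟩
    rw [hf a ha, hg b hb, sub_zero]

end ProdFormNeg

section RelComp

variable {X Y Z : Type*} [AddCommGroup X] [Module ℝ X] [AddCommGroup Y] [Module ℝ Y]
  [AddCommGroup Z] [Module ℝ Z]

lemma relComp_le_symplOrth {ωX : BilinForm ℝ X} {ωY : BilinForm ℝ Y} {ωZ : BilinForm ℝ Z}
    {f : Submodule ℝ (X × Y)} {g : Submodule ℝ (Y × Z)}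
    (hf : f ≤ symplOrth (prodFormNeg ωX ωY) f) (hg : g ≤ symplOrth (prodFormNeg ωY ωZ) g) :
    relComp f g ≤ symplOrth (prodFormNeg ωX ωZ) (relComp f g) := by
  rintro ⟨x, z⟩ ⟨y, hxy, hyz⟩ ⟨x', z'⟩ ⟨y', hxy', hyz'⟩
  have hXY : ωX x x' - ωY y y' = 0 := hf hxy (x', y') hxy'
  have hYZ : ωY y y' - ωZ z z' = 0 := hg hyz (y', z') hyz'
  calc prodFormNeg ωX ωZ (x, z) (x', z') = (ωX x x' - ωY y y') + (ωY y y' - ωZ z z') := by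
        rw [prodFormNeg_apply, sub_add_sub_cancel]
    _ = 0 := by rw [hXY, hYZ, add_zero]

variable (ωX : BilinForm ℝ X) (ωY : BilinForm ℝ Y) (ωZ : BilinForm ℝ Z)

def relCompForm : BilinForm ℝ ((X × Y) × (Y × Z)) :=
  prodFormNeg (prodFormNeg ωX ωY) (-prodFormNeg ωY ωZ)

variable (X Y Z) in
def middleDiagonal : Submodule ℝ ((X × Y) × (Y × Z)) :=
  LinearMap.range ((LinearMap.inr ℝ X Y).prod (LinearMap.inl ℝ Y Z))

variable {ωX ωY ωZ}

lemma isAlt_relCompForm (hX : ωX.IsAlt) (hY : ωY.IsAlt) (hZ : ωZ.IsAlt) :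
    (relCompForm ωX ωY ωZ).IsAlt :=
  isAlt_prodFormNeg (isAlt_prodFormNeg hX hY)
    (BilinForm.isAlt_neg.mpr (isAlt_prodFormNeg hY hZ))

lemma nondegenerate_relCompForm (hX : ωX.IsAlt) (hY : ωY.IsAlt) (hZ : ωZ.IsAlt)
    (hndX : ωX.SeparatingLeft) (hndY : ωY.SeparatingLeft) (hndZ : ωZ.SeparatingLeft) :
    (relCompForm ωX ωY ωZ).Nondegenerate :=
  (isAlt_relCompForm hX hY hZ).isRefl.nondegenerate_iff_separatingLeft.mpr <|
    separatingLeft_prodFormNeg (separatingLeft_prodFormNeg hndX hndY)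
      (separatingLeft_neg (separatingLeft_prodFormNeg hndY hndZ))

lemma mem_symplOrth_middleDiagonal (hndY : ωY.SeparatingLeft) {v : (X × Y) × (Y × Z)} :
    v ∈ symplOrth (relCompForm ωX ωY ωZ) (middleDiagonal X Y Z) ↔ v.1.2 = v.2.1 := by
  have hpair : ∀ y, relCompForm ωX ωY ωZ v ((0, y), (y, 0)) = ωY (v.2.1 - v.1.2) y := by
    intro y
    simp only [relCompForm, prodFormNeg_apply, LinearMap.neg_apply, map_zero, map_sub,
      LinearMap.sub_apply]
    ring
  simp only [middleDiagonal, mem_symplOrth, LinearMap.mem_range, forall_exists_index,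
    forall_apply_eq_imp_iff]
  refine ⟨fun h => ?_, fun h y => ?_⟩
  · exact (sub_eq_zero.mp (hndY _ fun y => (hpair y).symm.trans (h y))).symm
  · exact (hpair y).trans (by rw [h, sub_self, map_zero, LinearMap.zero_apply])

variable [FiniteDimensional ℝ X] [FiniteDimensional ℝ Y] [FiniteDimensional ℝ Z]

lemma symplOrth_relComp_le (hX : ωX.IsAlt) (hY : ωY.IsAlt) (hZ : ωZ.IsAlt)
    (hndX : ωX.SeparatingLeft) (hndY : ωY.SeparatingLeft) (hndZ : ωZ.SeparatingLeft)
    {f : Submodule ℝ (X × Y)} {g : Submodule ℝ (Y × Z)}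
    (hf : symplOrth (prodFormNeg ωX ωY) f = f) (hg : symplOrth (prodFormNeg ωY ωZ) g = g) :
    symplOrth (prodFormNeg ωX ωZ) (relComp f g) ≤ relComp f g := by
  set Ω := relCompForm ωX ωY ωZ
  have hrefl : Ω.IsRefl := (isAlt_relCompForm hX hY hZ).isRefl
  have hnd : Ω.Nondegenerate := nondegenerate_relCompForm hX hY hZ hndX hndY hndZ
  have hL : symplOrth Ω (f.prod g) = f.prod g :=
    (symplOrth_prod _ _ f g).trans (by rw [symplOrth_neg, hf, hg])
  rintro ⟨x, z⟩ hxz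
  have hlift :
      ((x, 0), (0, z)) ∈ symplOrth Ω (f.prod g ⊓ symplOrth Ω (middleDiagonal X Y Z)) := by
    rintro ⟨⟨x', y⟩, ⟨y', z'⟩⟩ ⟨⟨hxy, hyz⟩, hdiag⟩
    obtain rfl : y = y' := (mem_symplOrth_middleDiagonal hndY).mp hdiag
    simpa [Ω, relCompForm] using hxz (x', z') ⟨y, hxy, hyz⟩
  rw [symplOrth_inf hrefl hnd, hL, symplOrth_symplOrth hrefl hnd] at hlift
  obtain ⟨l, hl, _, ⟨y, rfl⟩, hsum⟩ := Submodule.mem_sup.mp hlift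
  obtain rfl : l = ((x, -y), (-y, z)) := by
    rw [eq_sub_of_add_eq hsum]
    simp
  exact ⟨-y, hl.1, hl.2⟩

end RelComp

/-- The set-theoretic composition of two linear canonical relations
(Lagrangian subspaces of `X × Y` resp. `Y × Z` with the forms `ω_X ⊕ (−ω_Y)` resp.
`ω_Y ⊕ (−ω_Z)`) is a Lagrangian subspace of `X × Z` with the form `ω_X ⊕ (−ω_Z)`. -/
theorem relComp_lagrangian
    {X Y Z : Type*} [AddCommGroup X] [Module ℝ X] [FiniteDimensional ℝ X]
    [AddCommGroup Y] [Module ℝ Y] [FiniteDimensional ℝ Y]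
    [AddCommGroup Z] [Module ℝ Z] [FiniteDimensional ℝ Z]
    (ωX : X →ₗ[ℝ] X →ₗ[ℝ] ℝ) (ωY : Y →ₗ[ℝ] Y →ₗ[ℝ] ℝ) (ωZ : Z →ₗ[ℝ] Z →ₗ[ℝ] ℝ)
    (haltX : ∀ v : X, ωX v v = 0) (hndX : ∀ v : X, (∀ w : X, ωX v w = 0) → v = 0)
    (haltY : ∀ v : Y, ωY v v = 0) (hndY : ∀ v : Y, (∀ w : Y, ωY v w = 0) → v = 0)
    (haltZ : ∀ v : Z, ωZ v v = 0) (hndZ : ∀ v : Z, (∀ w : Z, ωZ v w = 0) → v = 0)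
    (f : Submodule ℝ (X × Y)) (g : Submodule ℝ (Y × Z))
    (hf : symplOrth (prodFormNeg ωX ωY) f = f)
    (hg : symplOrth (prodFormNeg ωY ωZ) g = g) :
    symplOrth (prodFormNeg ωX ωZ) (relComp f g) = relComp f g :=
  le_antisymm (symplOrth_relComp_le haltX haltY haltZ hndX hndY hndZ hf hg)
    (relComp_le_symplOrth hf.ge hg.ge)
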